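/- (Certificate of decomposition.) Let n be a positive integer and let g : ℤ_n → ℤ_n be a functional tree map. Then Φ(g) is nonempty (i.e., g admits a β⃗-labeling) if and only if the canonical representative of the polynomial certificate P_g is not the zero polynomial. -/

import Mathlib

open MvPolynomial

/-- `g : Fin n → Fin n` is a functional tree map if the image of `Fin n` under the
`(n-1)`-fold iterate of `g` is a singleton. -/
def IsFunctionalTreeMap (n : ℕ) (g : Fin n → Fin n) : Prop :=
  ∃ r : Fin n, ∀ v : Fin n, g^[n - 1] v = r

/-- The distance from `v` to the root of the functional tree prescribed by `g`. -/
noncomputable def treeDist (n : ℕ) (g : Fin n → Fin n) (v : Fin n) : ℕ :=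
  sInf {k : ℕ | g^[k] v = g^[n - 1] v}

/-- `σ` witnesses a β⃗-labeling of `g`. -/
def IsBetaLabeling (n : ℕ) (g : Fin n → Fin n) (σ : Equiv.Perm (Fin n)) : Prop :=
  (Set.range fun v : Fin n =>
      ((-1 : ℤ) ^ treeDist n (⇑σ ∘ g ∘ ⇑σ.symm) v) *
        (((σ (g (σ.symm v)) : ℕ) : ℤ) - ((v : ℕ) : ℤ)))
    = Set.Ico (0 : ℤ) (n : ℤ)

/-- The edge label binomial `(-1)^{d_g(v)} (x_{g(v)} - x_v)`. -/
noncomputable def edgeBinom (n : ℕ) (g : Fin n → Fin n) (v : Fin n) :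
    MvPolynomial (Fin n) ℚ :=
  (-1 : MvPolynomial (Fin n) ℚ) ^ treeDist n g v * (X (g v) - X v)

/-- The polynomial certificate of decomposition `P_g = V ⬝ E_g ⬝ N_g`. -/
noncomputable def certP (n : ℕ) (g : Fin n → Fin n) : MvPolynomial (Fin n) ℚ :=
  (∏ v : Fin n, ∏ u ∈ Finset.Iio v, (X v - X u)) *
    (∏ v : Fin n, ∏ u ∈ Finset.Iio v, (edgeBinom n g v - edgeBinom n g u)) *
    (∏ v : Fin n, ∏ i ∈ Finset.Ioo 0 n, (edgeBinom n g v + C (i : ℚ)))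

/-- The Lagrange basis polynomial `L_f`. -/
noncomputable def lagrangeBasis (n : ℕ) (f : Fin n → Fin n) : MvPolynomial (Fin n) ℚ :=
  ∏ i : Fin n, ∏ j ∈ Finset.univ.erase (f i),
    C ((((f i : ℕ) : ℚ) - ((j : ℕ) : ℚ))⁻¹) * (X i - C ((j : ℕ) : ℚ))

/-- The canonical representative of `H` modulo `{(x_i)^{n̲} : i}`, obtained by
Lagrange interpolation over the lattice `(Fin n)^n`. -/
noncomputable def canonRep (n : ℕ) (H : MvPolynomial (Fin n) ℚ) :
    MvPolynomial (Fin n) ℚ :=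
  ∑ f : Fin n → Fin n,
    C (eval (fun i : Fin n => ((f i : ℕ) : ℚ)) H) * lagrangeBasis n f

/-! `canonRep n H` interpolates `H` on the lattice `(ℤ_n)^n`, so it is nonzero iff `H` is nonzero
at some lattice point `f`. At `f`, the factor `V` is nonzero iff `f` is injective, i.e. a
permutation; `E_g` iff the edge labels `(-1)^{d_g(v)} (f (g v) - f v)` are pairwise distinct; and
`N_g` iff none of them lies in `{-(n-1), …, -1}`. As every edge label lies strictly between `-n`
and `n`, together these say that the `n` labels are exactly `0, …, n-1`. Conjugating `g` by `f`
preserves the distances to the root, so this is the β⃗-labeling condition for `σ = f`. -/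

open Finset Function

section

variable {n : ℕ}

theorem Matrix.det_vandermonde_eq_prod_Iio {R : Type*} [CommRing R] (F : Fin n → R) :
    (vandermonde F).det = ∏ v, ∏ u ∈ Iio v, (F v - F u) := by
  rw [det_vandermonde]
  exact prod_comm' (by simp)

theorem Finset.image_univ_eq_iff {ι β : Type*} [Fintype ι] [DecidableEq β] {F : ι → β}
    {s : Finset β} (hs : #s = Fintype.card ι) :
    univ.image F = s ↔ Injective F ∧ ∀ i, F i ∈ s := by
  constructor
  · rintro rfl
    refine ⟨fun a b hab => ?_, fun i => mem_image_of_mem F (mem_univ i)⟩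
    exact card_image_iff.mp hs (by simp) (by simp) hab
  · rintro ⟨hinj, hmem⟩
    refine eq_of_subset_of_card_le (by simpa [subset_iff]) ?_
    rw [card_image_of_injective _ hinj, hs, card_univ]

theorem prod_Ioo_intCast_add_ne_zero_iff {R : Type*} [CommRing R] [IsDomain R] [CharZero R]
    {z : ℤ} (hz : -n < z) :
    ∏ i ∈ Ioo 0 n, ((z : R) + (i : R)) ≠ 0 ↔ 0 ≤ z := by
  have hcast (i : ℕ) : (z : R) + (i : R) = ((z + i : ℤ) : R) := by push_cast; rfl
  simp only [prod_ne_zero_iff, mem_Ioo, hcast, ne_eq, Int.cast_eq_zero]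
  constructor
  · intro h
    by_contra hneg
    exact h z.natAbs ⟨by omega, by omega⟩ (by omega)
  · intro h i hi
    omega

def latticePoint (f : Fin n → Fin n) : Fin n → ℚ := fun i => ((f i : ℕ) : ℚ)

theorem latticePoint_injective_iff {f : Fin n → Fin n} :
    Injective (latticePoint f) ↔ Injective f :=
  (Nat.cast_injective.comp Fin.val_injective).of_comp_iff f

theorem eval_latticePoint_lagrangeBasis (f f' : Fin n → Fin n) :
    eval (latticePoint f') (lagrangeBasis n f) = if f' = f then 1 else 0 := by
  simp only [lagrangeBasis, map_prod, map_mul, map_sub, eval_C, eval_X, latticePoint]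
  split_ifs with h
  · subst h
    refine prod_eq_one fun i _ => prod_eq_one fun j hj => inv_mul_cancel₀ ?_
    exact sub_ne_zero.mpr (by exact_mod_cast Fin.val_ne_of_ne (ne_of_mem_erase hj).symm)
  · obtain ⟨i, hi⟩ := ne_iff.mp h
    exact prod_eq_zero (mem_univ i) (prod_eq_zero (mem_erase.mpr ⟨hi, mem_univ _⟩) (by simp))

theorem eval_latticePoint_canonRep (H : MvPolynomial (Fin n) ℚ) (f : Fin n → Fin n) :
    eval (latticePoint f) (canonRep n H) = eval (latticePoint f) H := by
  rw [canonRep, map_sum, sum_eq_single f (fun f' _ hf' => by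
    rw [map_mul, eval_latticePoint_lagrangeBasis, if_neg hf'.symm, mul_zero]) (by simp)]
  rw [map_mul, eval_latticePoint_lagrangeBasis, if_pos rfl, mul_one, eval_C]
  rfl

theorem canonRep_eq_zero_iff (H : MvPolynomial (Fin n) ℚ) :
    canonRep n H = 0 ↔ ∀ f : Fin n → Fin n, eval (latticePoint f) H = 0 := by
  refine ⟨fun h f => ?_, fun h => sum_eq_zero fun f _ => ?_⟩
  · rw [← eval_latticePoint_canonRep, h, map_zero]
  · exact mul_eq_zero_of_left (C_eq_zero.mpr (h f)) _

noncomputable def edgeLabel (g f : Fin n → Fin n) (v : Fin n) : ℤ :=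
  (-1) ^ treeDist n g v * (((f (g v) : ℕ) : ℤ) - ((f v : ℕ) : ℤ))

theorem abs_edgeLabel_lt (g f : Fin n → Fin n) (v : Fin n) : |edgeLabel g f v| < n := by
  rw [edgeLabel, abs_mul, abs_pow, abs_neg, abs_one, one_pow, one_mul, abs_sub_lt_iff]
  have := (f (g v)).isLt
  have := (f v).isLt
  omega

theorem eval_latticePoint_edgeBinom (g f : Fin n → Fin n) (v : Fin n) :
    eval (latticePoint f) (edgeBinom n g v) = edgeLabel g f v := by
  simp only [edgeBinom, edgeLabel, latticePoint, map_mul, map_pow, map_neg, map_one, map_sub,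
    eval_X]
  push_cast
  rfl

theorem eval_latticePoint_certP_ne_zero_iff (g f : Fin n → Fin n) :
    eval (latticePoint f) (certP n g) ≠ 0 ↔
      Injective f ∧ Injective (edgeLabel g f) ∧ ∀ v, 0 ≤ edgeLabel g f v := by
  have hN (v : Fin n) := prod_Ioo_intCast_add_ne_zero_iff (R := ℚ)
    (neg_lt_of_abs_lt (abs_edgeLabel_lt g f v))
  simp only [certP, map_mul, map_prod, map_sub, map_add, eval_X, eval_C,
    eval_latticePoint_edgeBinom]
  rw [← Matrix.det_vandermonde_eq_prod_Iio (latticePoint f),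
    ← Matrix.det_vandermonde_eq_prod_Iio (fun v => ((edgeLabel g f v : ℤ) : ℚ)),
    mul_ne_zero_iff, mul_ne_zero_iff, Matrix.det_vandermonde_ne_zero_iff,
    Matrix.det_vandermonde_ne_zero_iff, latticePoint_injective_iff,
    prod_ne_zero_iff, and_assoc]
  simp only [mem_univ, true_imp_iff, hN]
  exact and_congr_right' (and_congr_left' (Int.cast_injective.of_comp_iff _))

theorem range_edgeLabel_eq_Ico_iff (g f : Fin n → Fin n) :
    Set.range (edgeLabel g f) = Set.Ico (0 : ℤ) n ↔
      Injective (edgeLabel g f) ∧ ∀ v, 0 ≤ edgeLabel g f v := by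
  rw [← coe_Ico, ← Set.image_univ, ← coe_univ, ← coe_image, coe_inj, image_univ_eq_iff (by simp)]
  simp only [mem_Ico, fun v => lt_of_abs_lt (abs_edgeLabel_lt g f v), and_true]

theorem treeDist_conj (g : Fin n → Fin n) (σ : Equiv.Perm (Fin n)) (w : Fin n) :
    treeDist n (σ ∘ g ∘ σ.symm) (σ w) = treeDist n g w := by
  have hconj : Semiconj σ g (σ ∘ g ∘ σ.symm) := fun v => by simp
  simp only [treeDist, ← (hconj.iterate_right _).eq, σ.injective.eq_iff]

theorem isBetaLabeling_iff (g : Fin n → Fin n) (σ : Equiv.Perm (Fin n)) :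
    IsBetaLabeling n g σ ↔ Set.range (edgeLabel g σ) = Set.Ico (0 : ℤ) n := by
  rw [IsBetaLabeling, ← σ.surjective.range_comp]
  congr! 2
  funext w
  simp [edgeLabel, treeDist_conj]

end

theorem beta_labeling_iff_canonRep_ne_zero_general
    (n : ℕ) (g : Fin n → Fin n) :
    (∃ σ : Equiv.Perm (Fin n), IsBetaLabeling n g σ) ↔ canonRep n (certP n g) ≠ 0 := by
  rw [Ne, canonRep_eq_zero_iff, not_forall]
  simp only [← ne_eq, eval_latticePoint_certP_ne_zero_iff, isBetaLabeling_iff,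
    range_edgeLabel_eq_Ico_iff]
  constructor
  · rintro ⟨σ, h⟩
    exact ⟨σ, σ.injective, h⟩
  · rintro ⟨f, hf, h⟩
    exact ⟨.ofBijective f hf.bijective_of_finite, h⟩

/-- Certificate of decomposition: a functional tree map `g` admits a β⃗-labeling
(i.e. `Φ(g)` is nonempty) if and only if the canonical representative of its polynomial
certificate is not the zero polynomial. -/
theorem beta_labeling_iff_canonRep_ne_zero
    (n : ℕ) (hn : 0 < n) (g : Fin n → Fin n) (hg : IsFunctionalTreeMap n g) :
    (∃ σ : Equiv.Perm (Fin n), IsBetaLabeling n g σ) ↔ canonRep n (certP n g) ≠ 0 :=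
  beta_labeling_iff_canonRep_ne_zero_general n g
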